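/- arXiv:1606.09197 — 6 statements merged into one kernel-verified Lean document; each statement's English description precedes it below -/
import Mathlib

section
/- Performance difference lemma (Lemma 1): Let p and q be two policies for the same finite-horizon MDP (same initial distribution ρ₁, transition kernel P, horizon T and bounded measurable rewards r_t). Then the difference of policy returns satisfies J(p) − J(q) = Σ_{t=1}^T ∫_S ∫_A A_t^q(s,a) p_t(da|s) ρ_t^p(ds), i.e. the sum over time-steps of the expected advantage of q under the state distribution of p and the action distribution of p. -/
/-!
Time-steps are indexed `t = 0, …, T-1` (corresponding to `1, …, T` in the paper).

Write `W_t = ∫ V_t^q dρ_t^p`. Since `ρ_{t+1}^p` is the image of `ρ_t^p ⊗ p_t` under `P`, the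
expected advantage of `q` at step `t` under `p` equals `∫∫ r_t dp_t dρ_t^p + W_{t+1} - W_t`, so the
sum over `t` telescopes to `J(p) - ∫ V_0^q dρ₁`. For `p = q` every advantage term vanishes
(`V_t^q` is the `q_t`-average of `Q_t^q`), which identifies `∫ V_0^q dρ₁` with `J(q)`.
-/

open MeasureTheory ProbabilityTheory

noncomputable section

namespace MDP

variable {S A : Type*} [MeasurableSpace S] [MeasurableSpace A]

/-- The state distribution `ρ_t^π` of a policy `π` (at the 0-indexed time-step `t`):
`ρ_0^π = ρ₁` and `ρ_{t+1}^π` is the pushforward through the transition kernel `P`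
of the joint state–action measure obtained by composing `ρ_t^π` with the kernel `π_t`. -/
noncomputable def stateDist (ρ₁ : Measure S) (P : Kernel (S × A) S)
    (π : ℕ → Kernel S A) : ℕ → Measure S
  | 0 => ρ₁
  | (t + 1) =>
      Measure.bind (stateDist ρ₁ P π t) (fun s => Measure.bind (π t s) (fun a => P (s, a)))

/-- Auxiliary value functions, indexed by the number `k` of remaining time-steps:
`Vk P π r T k = V^π_{T-k}` (with the convention `V^π_T = 0`, i.e. `V^π_{T+1} = 0` in the
1-indexed notation of the paper). -/
noncomputable def Vk (P : Kernel (S × A) S) (π : ℕ → Kernel S A)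
    (r : ℕ → S → A → ℝ) (T : ℕ) : ℕ → S → ℝ
  | 0 => fun _ => 0
  | (k + 1) => fun s =>
      ∫ a, (r (T - (k + 1)) s a + ∫ s', Vk P π r T k s' ∂(P (s, a))) ∂(π (T - (k + 1)) s)

/-- The Q-function of policy `π` at (0-indexed) time-step `t`:
`Q_t^π(s,a) = r_t(s,a) + ∫ V_{t+1}^π(s') P(ds'|s,a)`. -/
noncomputable def Qfun (P : Kernel (S × A) S) (π : ℕ → Kernel S A)
    (r : ℕ → S → A → ℝ) (T : ℕ) (t : ℕ) (s : S) (a : A) : ℝ :=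
  r t s a + ∫ s', Vk P π r T (T - (t + 1)) s' ∂(P (s, a))

/-- The V-function of policy `π` at (0-indexed) time-step `t`. -/
noncomputable def Vfun (P : Kernel (S × A) S) (π : ℕ → Kernel S A)
    (r : ℕ → S → A → ℝ) (T : ℕ) (t : ℕ) (s : S) : ℝ :=
  Vk P π r T (T - t) s

/-- The advantage function `A_t^π(s,a) = Q_t^π(s,a) − V_t^π(s)`. -/
noncomputable def Adv (P : Kernel (S × A) S) (π : ℕ → Kernel S A)
    (r : ℕ → S → A → ℝ) (T : ℕ) (t : ℕ) (s : S) (a : A) : ℝ :=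
  Qfun P π r T t s a - Vfun P π r T t s

/-- The policy return `J(π) = Σ_{t=0}^{T-1} ∫_S ∫_A r_t(s,a) π_t(da|s) ρ_t^π(ds)`. -/
noncomputable def policyReturn (ρ₁ : Measure S) (P : Kernel (S × A) S)
    (r : ℕ → S → A → ℝ) (T : ℕ) (π : ℕ → Kernel S A) : ℝ :=
  ∑ t ∈ Finset.range T, ∫ s, ∫ a, r t s a ∂(π t s) ∂(stateDist ρ₁ P π t)

end MDP

def BoundedMeasurable {X : Type*} [MeasurableSpace X] (f : X → ℝ) : Prop :=
  Measurable f ∧ ∃ C, ∀ x, |f x| ≤ C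

namespace BoundedMeasurable

variable {X Y : Type*} [MeasurableSpace X] [MeasurableSpace Y] {f g : X → ℝ}

lemma integrable (hf : BoundedMeasurable f) (μ : Measure X) [IsFiniteMeasure μ] :
    Integrable f μ :=
  let ⟨C, hC⟩ := hf.2
  .of_bound hf.1.aestronglyMeasurable C (.of_forall hC)

lemma comp (hf : BoundedMeasurable f) {h : Y → X} (hh : Measurable h) :
    BoundedMeasurable (f ∘ h) :=
  let ⟨C, hC⟩ := hf.2
  ⟨hf.1.comp hh, C, fun y => hC (h y)⟩

lemma add (hf : BoundedMeasurable f) (hg : BoundedMeasurable g) :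
    BoundedMeasurable (f + g) :=
  let ⟨C, hC⟩ := hf.2
  let ⟨D, hD⟩ := hg.2
  ⟨hf.1.add hg.1, C + D, fun x => (abs_add_le _ _).trans (add_le_add (hC x) (hD x))⟩

lemma sub (hf : BoundedMeasurable f) (hg : BoundedMeasurable g) :
    BoundedMeasurable (f - g) :=
  let ⟨C, hC⟩ := hf.2
  let ⟨D, hD⟩ := hg.2
  ⟨hf.1.sub hg.1, C + D, fun x => (abs_sub _ _).trans (add_le_add (hC x) (hD x))⟩

lemma integral_kernel {f : X × Y → ℝ} (hf : BoundedMeasurable f)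
    (κ : Kernel X Y) [IsMarkovKernel κ] :
    BoundedMeasurable fun x => ∫ y, f (x, y) ∂κ x :=
  let ⟨C, hC⟩ := hf.2
  ⟨hf.1.stronglyMeasurable.integral_kernel_prod_right'.measurable, C, fun x => by
    simpa using norm_integral_le_of_norm_le_const (μ := κ x) (f := fun y => f (x, y))
      (.of_forall fun y => (Real.norm_eq_abs _).trans_le (hC (x, y)))⟩

end BoundedMeasurable

lemma MeasureTheory.Measure.integral_bind_kernel {X Y : Type*} [MeasurableSpace X]
    [MeasurableSpace Y] (μ : Measure X) (κ : Kernel X Y) {f : Y → ℝ}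
    (hf : Integrable f (κ ∘ₘ μ)) :
    ∫ y, f y ∂(κ ∘ₘ μ) = ∫ x, ∫ y, f y ∂κ x ∂μ :=
  Kernel.integral_comp (κ := Kernel.const Unit μ) (a := ()) hf

namespace MDP

variable {S A : Type*} [MeasurableSpace S] [MeasurableSpace A]

lemma bind_prodMk_apply (P : Kernel (S × A) S) (μ : Measure A) (s : S) {B : Set S}
    (hB : MeasurableSet B) : (μ.bind fun a => P (s, a)) B = ∫⁻ a, P (s, a) B ∂μ :=
  Measure.bind_apply hB (P.measurable.comp measurable_prodMk_left).aemeasurable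

lemma measurable_bind_prodMk (P : Kernel (S × A) S) (κ : Kernel S A) [IsSFiniteKernel κ] :
    Measurable fun s => (κ s).bind fun a => P (s, a) :=
  Measure.measurable_of_measurable_coe _ fun B hB => by
    simpa only [bind_prodMk_apply P _ _ hB] using (P.measurable_coe hB).lintegral_kernel_prod_right'

lemma stateDist_succ (ρ₁ : Measure S) (P : Kernel (S × A) S) (π : ℕ → Kernel S A) (t : ℕ)
    [SFinite (stateDist ρ₁ P π t)] [IsSFiniteKernel (π t)] :
    stateDist ρ₁ P π (t + 1) = P ∘ₘ (stateDist ρ₁ P π t ⊗ₘ π t) := by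
  ext B hB
  rw [stateDist, Measure.bind_apply hB (measurable_bind_prodMk P (π t)).aemeasurable,
    Measure.bind_apply hB P.aemeasurable, Measure.lintegral_compProd (P.measurable_coe hB)]
  simp only [bind_prodMk_apply P _ _ hB]

instance isFiniteMeasure_stateDist (ρ₁ : Measure S) [IsFiniteMeasure ρ₁]
    (P : Kernel (S × A) S) [IsFiniteKernel P] (π : ℕ → Kernel S A) [∀ t, IsFiniteKernel (π t)]
    (t : ℕ) : IsFiniteMeasure (stateDist ρ₁ P π t) := by
  induction t with
  | zero => assumption
  | succ t ih => rw [stateDist_succ]; infer_instance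

lemma integral_Qfun_eq_Vfun (P : Kernel (S × A) S) (π : ℕ → Kernel S A) (r : ℕ → S → A → ℝ)
    {T t : ℕ} (ht : t < T) (s : S) :
    ∫ a, Qfun P π r T t s a ∂(π t s) = Vfun P π r T t s := by
  obtain ⟨k, hk⟩ : ∃ k, T - t = k + 1 := ⟨T - t - 1, by omega⟩
  have ht_eq : T - (k + 1) = t := by omega
  have hk_eq : T - (t + 1) = k := by omega
  simp only [Vfun, Qfun, hk, Vk, ht_eq, hk_eq]

lemma Vfun_self (P : Kernel (S × A) S) (π : ℕ → Kernel S A) (r : ℕ → S → A → ℝ) (T : ℕ) :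
    Vfun P π r T T = 0 := by
  funext s
  simp [Vfun, Vk]

section Value

variable (P : Kernel (S × A) S) [IsMarkovKernel P] {r : ℕ → S → A → ℝ} {T : ℕ}

lemma boundedMeasurable_Vk (hr : ∀ t, BoundedMeasurable (Function.uncurry (r t)))
    (π : ℕ → Kernel S A) [∀ t, IsMarkovKernel (π t)] (k : ℕ) :
    BoundedMeasurable (Vk P π r T k) := by
  induction k with
  | zero => exact ⟨measurable_const, 0, fun _ => by simp [Vk]⟩
  | succ k ih =>
    exact ((hr _).add ((ih.comp measurable_snd).integral_kernel P)).integral_kernel (π _)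

lemma boundedMeasurable_Vfun (hr : ∀ t, BoundedMeasurable (Function.uncurry (r t)))
    (π : ℕ → Kernel S A) [∀ t, IsMarkovKernel (π t)] (t : ℕ) :
    BoundedMeasurable (Vfun P π r T t) :=
  boundedMeasurable_Vk P hr π _

lemma boundedMeasurable_Qfun (hr : ∀ t, BoundedMeasurable (Function.uncurry (r t)))
    (π : ℕ → Kernel S A) [∀ t, IsMarkovKernel (π t)] (t : ℕ) :
    BoundedMeasurable (Function.uncurry (Qfun P π r T t)) :=
  (hr t).add (((boundedMeasurable_Vk P hr π _).comp measurable_snd).integral_kernel P)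

lemma boundedMeasurable_Adv (hr : ∀ t, BoundedMeasurable (Function.uncurry (r t)))
    (π : ℕ → Kernel S A) [∀ t, IsMarkovKernel (π t)] (t : ℕ) :
    BoundedMeasurable (Function.uncurry (Adv P π r T t)) :=
  (boundedMeasurable_Qfun P hr π t).sub ((boundedMeasurable_Vfun P hr π t).comp measurable_fst)

lemma integral_Adv_self_eq_zero (hr : ∀ t, BoundedMeasurable (Function.uncurry (r t)))
    (π : ℕ → Kernel S A) [∀ t, IsMarkovKernel (π t)] {t : ℕ} (ht : t < T) (s : S) :
    ∫ a, Adv P π r T t s a ∂(π t s) = 0 := by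
  have hQ : Integrable (Qfun P π r T t s) (π t s) :=
    ((boundedMeasurable_Qfun P hr π t).comp measurable_prodMk_left).integrable _
  simp only [Adv]
  rw [integral_sub hQ (integrable_const _), integral_Qfun_eq_Vfun P π r ht, integral_const,
    probReal_univ, one_smul, sub_self]

end Value

section TwoPolicies

variable (ρ₁ : Measure S) [IsFiniteMeasure ρ₁] (P : Kernel (S × A) S) [IsMarkovKernel P]
  {r : ℕ → S → A → ℝ} (T : ℕ)

lemma integral_Adv_stateDist (hr : ∀ t, BoundedMeasurable (Function.uncurry (r t)))
    (p q : ℕ → Kernel S A) [∀ t, IsMarkovKernel (p t)] [∀ t, IsMarkovKernel (q t)] (t : ℕ) :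
    ∫ s, ∫ a, Adv P q r T t s a ∂(p t s) ∂(stateDist ρ₁ P p t) =
      ∫ s, ∫ a, r t s a ∂(p t s) ∂(stateDist ρ₁ P p t) +
        (∫ s, Vfun P q r T (t + 1) s ∂(stateDist ρ₁ P p (t + 1)) -
          ∫ s, Vfun P q r T t s ∂(stateDist ρ₁ P p t)) := by
  set μ := stateDist ρ₁ P p t
  have hjoint : ∀ f : S → A → ℝ, BoundedMeasurable (Function.uncurry f) →
      ∫ s, ∫ a, f s a ∂(p t s) ∂μ = ∫ x, Function.uncurry f x ∂(μ ⊗ₘ p t) :=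
    fun f hf => (Measure.integral_compProd (hf.integrable _)).symm
  have hV := boundedMeasurable_Vfun (T := T) P hr q
  have hnext : BoundedMeasurable fun x : S × A => ∫ s', Vfun P q r T (t + 1) s' ∂P x :=
    ((hV _).comp measurable_snd).integral_kernel P
  have hcurrent : BoundedMeasurable fun x : S × A => Vfun P q r T t x.1 :=
    (hV t).comp measurable_fst
  have hcurrent_eq : ∫ x, Vfun P q r T t x.1 ∂(μ ⊗ₘ p t) = ∫ s, Vfun P q r T t s ∂μ :=
    calc _ = ∫ s, ∫ _, Vfun P q r T t s ∂(p t s) ∂μ :=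
          (hjoint (fun s _ => Vfun P q r T t s) hcurrent).symm
      _ = _ := by simp
  rw [hjoint _ (boundedMeasurable_Adv P hr q t), hjoint _ (hr t), stateDist_succ,
    Measure.integral_bind_kernel _ _ ((hV _).integrable _), ← hcurrent_eq, ← add_sub_assoc,
    ← integral_add ((hr t).integrable _) (hnext.integrable _)]
  exact integral_sub (((hr t).add hnext).integrable _) (hcurrent.integrable _)

lemma sum_integral_Adv_stateDist (hr : ∀ t, BoundedMeasurable (Function.uncurry (r t)))
    (p q : ℕ → Kernel S A) [∀ t, IsMarkovKernel (p t)] [∀ t, IsMarkovKernel (q t)] :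
    ∑ t ∈ Finset.range T, ∫ s, ∫ a, Adv P q r T t s a ∂(p t s) ∂(stateDist ρ₁ P p t) =
      policyReturn ρ₁ P r T p - ∫ s, Vfun P q r T 0 s ∂ρ₁ := by
  simp only [integral_Adv_stateDist ρ₁ P T hr p q]
  rw [Finset.sum_add_distrib,
    Finset.sum_range_sub (fun t => ∫ s, Vfun P q r T t s ∂(stateDist ρ₁ P p t)), Vfun_self]
  simp [policyReturn, stateDist, sub_eq_add_neg]

lemma policyReturn_eq_integral_Vfun (hr : ∀ t, BoundedMeasurable (Function.uncurry (r t)))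
    (π : ℕ → Kernel S A) [∀ t, IsMarkovKernel (π t)] :
    policyReturn ρ₁ P r T π = ∫ s, Vfun P π r T 0 s ∂ρ₁ := by
  have htelescope := sum_integral_Adv_stateDist ρ₁ P T hr π π
  rw [Finset.sum_eq_zero fun t ht => by
    simp [integral_Adv_self_eq_zero P hr π (Finset.mem_range.1 ht)]] at htelescope
  linarith

end TwoPolicies

/-- **Performance difference lemma** (Lemma 1): for any two policies `p` and `q` of the same
finite-horizon MDP, `J(p) − J(q) = Σ_t E_{s ∼ ρ_t^p, a ∼ p_t(·|s)} [A_t^q(s,a)]`. -/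
theorem performance_difference
    (ρ₁ : Measure S) [IsProbabilityMeasure ρ₁]
    (P : Kernel (S × A) S) [IsMarkovKernel P]
    (T : ℕ) (r : ℕ → S → A → ℝ)
    (hr_meas : ∀ t, Measurable (Function.uncurry (r t)))
    (hr_bdd : ∀ t, ∃ C : ℝ, ∀ s a, |r t s a| ≤ C)
    (p q : ℕ → Kernel S A) [∀ t, IsMarkovKernel (p t)] [∀ t, IsMarkovKernel (q t)] :
    policyReturn ρ₁ P r T p - policyReturn ρ₁ P r T q =
      ∑ t ∈ Finset.range T,
        ∫ s, ∫ a, Adv P q r T t s a ∂(p t s) ∂(stateDist ρ₁ P p t) := by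
  have hr : ∀ t, BoundedMeasurable (Function.uncurry (r t)) := fun t =>
    let ⟨C, hC⟩ := hr_bdd t
    ⟨hr_meas t, C, fun x => hC x.1 x.2⟩
  rw [sum_integral_Adv_stateDist ρ₁ P T hr p q, policyReturn_eq_integral_Vfun ρ₁ P T hr q]

end MDP
end
end

section
/- Nonnegativity of the covariance part of the Gaussian KL divergence (Eq. (posKLCov)): For any two positive definite real n × n matrices Σ and Σ', one has trace(Σ'⁻¹ Σ) − n + log(det Σ' / det Σ) ≥ 0. -/
/-!
Write `Σ' = Bᴴ B` with `B` invertible. Then `A = B⁻ᴴ Σ B⁻¹` is positive definite, has the same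
trace as `Σ'⁻¹ Σ` and determinant `det Σ / det Σ'`. In terms of the (positive) eigenvalues `μᵢ`
of `A` the claim reads `∑ (μᵢ - 1 - log μᵢ) ≥ 0`, which holds termwise since `log x ≤ x - 1`.
-/

open Matrix

namespace Matrix

variable {m : Type*} [Fintype m] [DecidableEq m]

lemma PosDef.log_det_le_trace_sub_card {A : Matrix m m ℝ} (hA : A.PosDef) :
    Real.log A.det ≤ A.trace - Fintype.card m := by
  have hpos := hA.eigenvalues_pos
  rw [hA.isHermitian.det_eq_prod_eigenvalues, hA.isHermitian.trace_eq_sum_eigenvalues,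
    RCLike.ofReal_real_eq_id]
  simp only [id]
  rw [Real.log_prod fun i _ ↦ (hpos i).ne', Fintype.card_eq_sum_ones]
  calc ∑ i, Real.log (hA.isHermitian.eigenvalues i)
      ≤ ∑ i, (hA.isHermitian.eigenvalues i - 1) :=
        Finset.sum_le_sum fun i _ ↦ Real.log_le_sub_one_of_pos (hpos i)
    _ = _ := by push_cast; rw [Finset.sum_sub_distrib]

lemma PosDef.log_det_div_le_trace_inv_mul_sub_card {S S' : Matrix m m ℝ} (hS : S.PosDef)
    (hS' : S'.PosDef) : Real.log (S.det / S'.det) ≤ (S'⁻¹ * S).trace - Fintype.card m := by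
  obtain ⟨B, hB, rfl⟩ : ∃ B, IsUnit B ∧ S' = star B * B := by
    open scoped MatrixOrder in
    exact CStarAlgebra.isStrictlyPositive_iff_eq_star_mul_self.mp hS'.isStrictlyPositive
  have hA : (star B⁻¹ * S * B⁻¹).PosDef :=
    (isUnit_nonsing_inv_iff.mpr hB).posDef_star_left_conjugate_iff.mpr hS
  have htrace : (star B⁻¹ * S * B⁻¹).trace = ((star B * B)⁻¹ * S).trace := by
    rw [trace_mul_cycle, mul_inv_rev, star_eq_conjTranspose, star_eq_conjTranspose,
      conjTranspose_nonsing_inv]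
  have hdet : (star B⁻¹ * S * B⁻¹).det = S.det / (star B * B).det := by
    have : B.det ≠ 0 := ((isUnit_iff_isUnit_det B).mp hB).ne_zero
    simp only [star_eq_conjTranspose, conjTranspose_eq_transpose_of_trivial, det_mul,
      det_transpose, det_nonsing_inv, Ring.inverse_eq_inv']
    field_simp
  simpa [htrace, hdet] using hA.log_det_le_trace_sub_card

end Matrix

/-- For any two positive definite real `n × n` matrices `Σ` and `Σ'`,
`trace(Σ'⁻¹ Σ) − n + log(det Σ' / det Σ) ≥ 0`. -/
theorem gaussian_kl_cov_nonneg {n : ℕ} (S S' : Matrix (Fin n) (Fin n) ℝ)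
    (hS : S.PosDef) (hS' : S'.PosDef) :
    0 ≤ (S'⁻¹ * S).trace - (n : ℝ) + Real.log (S'.det / S.det) := by
  have h := hS.log_det_div_le_trace_inv_mul_sub_card hS'
  rw [Fintype.card_fin, ← inv_div, Real.log_inv] at h
  linarith
end

section
/- Quadratic-form bound via traces (Appendix B): Let M be a real symmetric positive semidefinite n × n matrix, Σ a real symmetric positive definite n × n matrix, and x ∈ ℝⁿ. Then xᵀ M x ≤ (xᵀ Σ⁻¹ x) · trace(M Σ). -/
/-!
Factor `M = Cᵀ C` and let `cᵢ` be the rows of `C`, so that `xᵀ M x = ∑ᵢ (cᵢ ⬝ x)²` and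
`tr (M Σ) = tr (C Σ Cᵀ) = ∑ᵢ cᵢᵀ Σ cᵢ`. Cauchy–Schwarz for the inner product `⟪u, v⟫ = uᵀ Σ v`,
applied to `cᵢ` and `Σ⁻¹ x`, gives `(cᵢ ⬝ x)² ≤ (cᵢᵀ Σ cᵢ) (xᵀ Σ⁻¹ x)`; now sum over `i`.
-/

open Matrix

namespace Matrix

variable {m n : Type*} [Fintype m] [Fintype n]

open scoped MatrixOrder in
theorem PosSemidef.exists_eq_transpose_mul_self [DecidableEq n] {M : Matrix n n ℝ}
    (hM : M.PosSemidef) : ∃ C : Matrix n n ℝ, M = Cᵀ * C := by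
  obtain ⟨C, rfl⟩ := CStarAlgebra.nonneg_iff_eq_star_mul_self.mp hM.nonneg
  exact ⟨C, rfl⟩

theorem PosSemidef.sq_dotProduct_mulVec_le {S : Matrix n n ℝ} (hS : S.PosSemidef) (u w : n → ℝ) :
    (u ⬝ᵥ (S *ᵥ w)) ^ 2 ≤ (u ⬝ᵥ (S *ᵥ u)) * (w ⬝ᵥ (S *ᵥ w)) := by
  let := S.toSeminormedAddCommGroup hS
  let := S.toInnerProductSpace hS
  have inner_eq (v v' : n → ℝ) : inner ℝ v v' = v ⬝ᵥ (S *ᵥ v') := dotProduct_comm _ _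
  simpa only [inner_eq, sq] using real_inner_mul_inner_self_le u w

theorem PosDef.sq_dotProduct_le [DecidableEq n] {S : Matrix n n ℝ} (hS : S.PosDef) (u x : n → ℝ) :
    (u ⬝ᵥ x) ^ 2 ≤ (u ⬝ᵥ (S *ᵥ u)) * (x ⬝ᵥ (S⁻¹ *ᵥ x)) := by
  have hSS : S *ᵥ (S⁻¹ *ᵥ x) = x := by
    rw [mulVec_mulVec, mul_nonsing_inv _ ((isUnit_iff_isUnit_det S).mp hS.isUnit), one_mulVec]
  have := hS.posSemidef.sq_dotProduct_mulVec_le u (S⁻¹ *ᵥ x)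
  rwa [hSS, dotProduct_comm (S⁻¹ *ᵥ x)] at this

variable {R : Type*} [CommRing R]

theorem dotProduct_transpose_mul_self_mulVec (C : Matrix m n R) (x : n → R) :
    x ⬝ᵥ ((Cᵀ * C) *ᵥ x) = ∑ i, (C i ⬝ᵥ x) ^ 2 := by
  rw [← mulVec_mulVec, dotProduct_mulVec, vecMul_transpose]
  simp only [dotProduct, mulVec, sq]

theorem trace_transpose_mul_self_mul (C : Matrix m n R) (S : Matrix n n R) :
    (Cᵀ * C * S).trace = ∑ i, C i ⬝ᵥ (S *ᵥ C i) := by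
  rw [Matrix.mul_assoc, trace_mul_comm, trace]
  refine Finset.sum_congr rfl fun i _ => ?_
  rw [diag_apply, mul_apply, dotProduct_mulVec, ← mul_apply_eq_vecMul]
  simp only [transpose_apply, dotProduct, mul_comm]

end Matrix

/-- Let `M` be real symmetric positive semidefinite, `Σ` real symmetric positive definite
and `x ∈ ℝⁿ`. Then `xᵀ M x ≤ (xᵀ Σ⁻¹ x) · trace(M Σ)`. -/
theorem quad_form_le_trace {n : ℕ} (M S : Matrix (Fin n) (Fin n) ℝ)
    (hM : M.PosSemidef) (hS : S.PosDef) (x : Fin n → ℝ) :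
    x ⬝ᵥ (M *ᵥ x) ≤ (x ⬝ᵥ (S⁻¹ *ᵥ x)) * (M * S).trace := by
  obtain ⟨C, rfl⟩ := hM.exists_eq_transpose_mul_self
  rw [dotProduct_transpose_mul_self_mulVec, trace_transpose_mul_self_mul, Finset.mul_sum]
  gcongr with i
  rw [mul_comm]
  exact hS.sq_dotProduct_le (C i) x
end

section
/- Trace transfer inequality (Appendix B): Let M and Σ_p be real symmetric positive semidefinite n × n matrices and Σ_q a real symmetric positive definite n × n matrix. Then trace(M Σ_p) ≤ trace(M Σ_q) · trace(Σ_q⁻¹ Σ_p). -/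
/-!
Conjugating by `S = √Σ_q` rewrites the claim as `tr(A B) ≤ tr A · tr B` for the positive
semidefinite matrices `A = S M S` and `B = S⁻¹ Σ_p S⁻¹`. This holds because `A ≤ tr(A) • 1`
in the Loewner order (its eigenvalues are nonnegative, so each is at most their sum), so
`tr(A B) = tr(√B A √B) ≤ tr A · tr(√B √B)`.
-/

open Matrix
open scoped MatrixOrder ComplexOrder

variable {n 𝕜 : Type*} [Fintype n] [RCLike 𝕜]

theorem Matrix.trace_mono {A B : Matrix n n 𝕜} (h : A ≤ B) : A.trace ≤ B.trace :=
  (tracePositiveLinearMap n ℝ 𝕜).monotone h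

namespace Matrix.PosSemidef

variable {A B : Matrix n n 𝕜}

theorem le_trace_smul_one [DecidableEq n] (hA : A.PosSemidef) : A ≤ A.trace • 1 := by
  have htrace := hA.isHermitian.trace_eq_sum_eigenvalues
  rw [← RCLike.ofReal_sum] at htrace
  rw [htrace, ← RCLike.real_smul_eq_coe_smul (K := 𝕜), ← Algebra.algebraMap_eq_smul_one]
  refine le_algebraMap_of_spectrum_le (fun x hx => ?_) hA.isHermitian
  obtain ⟨i, rfl⟩ := hA.isHermitian.spectrum_real_eq_range_eigenvalues ▸ hx
  exact Finset.single_le_sum (fun j _ => hA.eigenvalues_nonneg j) (Finset.mem_univ i)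

theorem trace_mul_le_trace_mul_trace (hA : A.PosSemidef) (hB : B.PosSemidef) :
    (A * B).trace ≤ A.trace * B.trace := by
  classical
  set R := CFC.sqrt B
  have hRR : R * R = B := CFC.sqrt_mul_sqrt_self B hB.nonneg
  calc (A * B).trace = (R * A * R).trace := by rw [← hRR, ← Matrix.mul_assoc, trace_mul_cycle]
    _ ≤ (R * (A.trace • 1) * R).trace :=
        trace_mono (conjugate_le_conjugate_of_nonneg hA.le_trace_smul_one (CFC.sqrt_nonneg B))
    _ = A.trace * B.trace := by
        rw [Matrix.mul_smul, Matrix.mul_one, Matrix.smul_mul, hRR, trace_smul, smul_eq_mul]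

theorem trace_mul_le_trace_conj_mul_trace_conj_inv [DecidableEq n] (hA : A.PosSemidef)
    (hB : B.PosSemidef) {S : Matrix n n 𝕜} (hS : IsSelfAdjoint S) (hS_unit : IsUnit S) :
    (A * B).trace ≤ (S * A * S).trace * (S⁻¹ * B * S⁻¹).trace := by
  have hS_mul_inv : S * S⁻¹ = 1 := mul_nonsing_inv S ((isUnit_iff_isUnit_det S).1 hS_unit)
  have hS_inv_mul : S⁻¹ * S = 1 := mul_eq_one_comm.1 hS_mul_inv
  have hSAS : (S * A * S).PosSemidef := nonneg_iff_posSemidef.1 (hS.conjugate_nonneg hA.nonneg)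
  have hSBS : (S⁻¹ * B * S⁻¹).PosSemidef :=
    nonneg_iff_posSemidef.1 (IsSelfAdjoint.conjugate_nonneg hB.nonneg (IsHermitian.inv (A := S) hS))
  calc (A * B).trace = (S * A * S * (S⁻¹ * B * S⁻¹)).trace := by
        rw [show S * A * S * (S⁻¹ * B * S⁻¹) = S * (A * B) * S⁻¹ by
          simp only [Matrix.mul_assoc, ← Matrix.mul_assoc S S⁻¹, hS_mul_inv, Matrix.one_mul],
          trace_mul_cycle, hS_inv_mul, Matrix.one_mul]
    _ ≤ (S * A * S).trace * (S⁻¹ * B * S⁻¹).trace := hSAS.trace_mul_le_trace_mul_trace hSBS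

end Matrix.PosSemidef

/-- Let `M` and `Σ_p` be real symmetric positive semidefinite and `Σ_q` real symmetric positive
definite. Then `trace(M Σ_p) ≤ trace(M Σ_q) · trace(Σ_q⁻¹ Σ_p)`. -/
theorem trace_transfer {n : ℕ} (M Sp Sq : Matrix (Fin n) (Fin n) ℝ)
    (hM : M.PosSemidef) (hSp : Sp.PosSemidef) (hSq : Sq.PosDef) :
    (M * Sp).trace ≤ (M * Sq).trace * (Sq⁻¹ * Sp).trace := by
  set S := CFC.sqrt Sq
  have hSS : S * S = Sq := CFC.sqrt_mul_sqrt_self Sq hSq.posSemidef.nonneg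
  have hS_unit : IsUnit S := (CFC.isUnit_sqrt_iff Sq hSq.posSemidef.nonneg).2 hSq.isUnit
  have hS : IsSelfAdjoint S := (CFC.sqrt_nonneg Sq).isSelfAdjoint
  calc (M * Sp).trace ≤ (S * M * S).trace * (S⁻¹ * Sp * S⁻¹).trace :=
        hM.trace_mul_le_trace_conj_mul_trace_conj_inv hSp hS hS_unit
    _ = (M * Sq).trace * (Sq⁻¹ * Sp).trace := by
        rw [trace_mul_comm, ← Matrix.mul_assoc, hSS, trace_mul_comm, trace_mul_comm (S⁻¹ * Sp),
          ← Matrix.mul_assoc, ← Matrix.mul_inv_rev, hSS]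
end

section
/- Combined matrix bound underlying Eq. (kl_diff): Let M be a real symmetric positive semidefinite n × n matrix, Σ_p and Σ_q real symmetric positive definite n × n matrices, μ_p, μ_q ∈ ℝⁿ, and ε_t, ε ≥ 0. Assume: (i) (μ_p − μ_q)ᵀ Σ_q⁻¹ (μ_p − μ_q) ≤ 2 ε_t; (ii) trace(Σ_q⁻¹ Σ_p) − n − log det(Σ_q⁻¹ Σ_p) ≤ 2 ε_t; (iii) μ_qᵀ M μ_q + trace(M Σ_q) ≤ 2 ε. Then μ_pᵀ M μ_p + trace(M Σ_p) ≤ 2 ε (1 + 6 ε_t + 2 n). -/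
/-!
Write `Σq = S²` with `S = √Σq` and put `A = S⁻¹ Σp S⁻¹`. Hypothesis (ii) reads
`∑ (λᵢ - 1 - log λᵢ) ≤ 2εₜ` over the eigenvalues of `A`, and each summand is nonnegative, so
every `λᵢ ≤ 2 + 4εₜ`, i.e. `Σp ≤ (2 + 4εₜ) Σq` in the Loewner order. Pairing with `M` gives
`tr(M Σp) ≤ (2 + 4εₜ) tr(M Σq)`. For the means, with `d = μp - μq`, Cauchy–Schwarz for the form
`Σq⁻¹` gives `d dᵀ ≤ (dᵀ Σq⁻¹ d) Σq`, hence `dᵀ M d ≤ 2εₜ tr(M Σq)`, and Cauchy–Schwarz for `M`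
bounds the cross term `2 μqᵀ M d` by `2εₜ μqᵀ M μq + tr(M Σq)`. Adding up and using (iii) gives
`(3 + 6εₜ) · 2ε`, which is at most the claimed bound as soon as `n ≥ 1`.
-/

open Matrix
open scoped MatrixOrder

lemma Real.le_two_add_two_mul_of_sub_one_sub_log_le {x e : ℝ} (hx : 0 < x)
    (h : x - 1 - Real.log x ≤ e) : x ≤ 2 + 2 * e := by
  have hlog : Real.log x ≤ Real.log 2 + (x / 2 - 1) := by
    have := Real.log_le_sub_one_of_pos (half_pos hx)
    rwa [Real.log_div hx.ne' two_ne_zero, sub_le_iff_le_add'] at this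
  linarith [Real.log_two_lt_d9]

namespace Matrix

variable {ι : Type*} [Fintype ι]

lemma IsHermitian.dotProduct_mulVec_comm {A : Matrix ι ι ℝ} (hA : A.IsHermitian) (x y : ι → ℝ) :
    x ⬝ᵥ A *ᵥ y = y ⬝ᵥ A *ᵥ x := by
  rw [dotProduct_mulVec, dotProduct_comm, ← mulVec_transpose,
    ← conjTranspose_eq_transpose_of_trivial, hA.eq]

lemma PosSemidef.trace_mul_nonneg {A B : Matrix ι ι ℝ} (hA : A.PosSemidef) (hB : B.PosSemidef) :
    0 ≤ (A * B).trace := by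
  classical
  obtain ⟨C, rfl⟩ := CStarAlgebra.nonneg_iff_eq_star_mul_self.mp hB.nonneg
  rw [← Matrix.mul_assoc, trace_mul_comm, ← Matrix.mul_assoc]
  exact (hA.mul_mul_conjTranspose_same C).trace_nonneg

lemma PosSemidef.trace_mul_le_trace_mul {A B C : Matrix ι ι ℝ} (hA : A.PosSemidef) (hBC : B ≤ C) :
    (A * B).trace ≤ (A * C).trace := by
  have := hA.trace_mul_nonneg hBC
  rwa [Matrix.mul_sub, trace_sub, sub_nonneg] at this

lemma PosSemidef.dotProduct_mulVec_sq_le {A : Matrix ι ι ℝ} (hA : A.PosSemidef) (x y : ι → ℝ) :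
    (x ⬝ᵥ A *ᵥ y) ^ 2 ≤ (x ⬝ᵥ A *ᵥ x) * (y ⬝ᵥ A *ᵥ y) := by
  classical
  obtain ⟨B, rfl⟩ := CStarAlgebra.nonneg_iff_eq_star_mul_self.mp hA.nonneg
  have hB (u v : ι → ℝ) : u ⬝ᵥ (star B * B) *ᵥ v = (B *ᵥ u) ⬝ᵥ (B *ᵥ v) := by
    rw [← mulVec_mulVec, dotProduct_mulVec, star_eq_conjTranspose, vecMul_conjTranspose]
    simp
  rw [hB, hB, hB]
  simp only [dotProduct, ← sq]
  exact Finset.sum_mul_sq_le_sq_mul_sq _ _ _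

lemma IsHermitian.add_dotProduct_mulVec_add {A : Matrix ι ι ℝ} (hA : A.IsHermitian)
    (x y : ι → ℝ) :
    (x + y) ⬝ᵥ A *ᵥ (x + y) = x ⬝ᵥ A *ᵥ x + 2 * (x ⬝ᵥ A *ᵥ y) + y ⬝ᵥ A *ᵥ y := by
  rw [mulVec_add, add_dotProduct, dotProduct_add, dotProduct_add, hA.dotProduct_mulVec_comm y x]
  ring

section DecidableEq

variable [DecidableEq ι]

lemma PosDef.vecMulVec_le_smul {S : Matrix ι ι ℝ} (hS : S.PosDef) (x : ι → ℝ) :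
    vecMulVec x x ≤ (x ⬝ᵥ S⁻¹ *ᵥ x) • S := by
  refine PosSemidef.of_dotProduct_mulVec_nonneg
    ((hS.1.smul (IsSelfAdjoint.all _)).sub
      (by simpa using (posSemidef_vecMulVec_self_star x).isHermitian)) fun y => ?_
  -- Cauchy–Schwarz for the form `S⁻¹`, applied to `x` and `S y`
  have hcs := hS.inv.posSemidef.dotProduct_mulVec_sq_le x (S *ᵥ y)
  rw [mulVec_mulVec, nonsing_inv_mul _ (isUnit_iff_isUnit_det _ |>.mp hS.isUnit), one_mulVec,
    dotProduct_comm (S *ᵥ y)] at hcs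
  rw [star_trivial, sub_mulVec, smul_mulVec, vecMulVec_mulVec, dotProduct_sub, dotProduct_smul,
    dotProduct_smul]
  simp only [MulOpposite.smul_eq_mul_unop, MulOpposite.unop_op, smul_eq_mul]
  rw [dotProduct_comm y x]
  nlinarith [hcs]

lemma PosSemidef.dotProduct_mulVec_le_trace_mul_mul {M S : Matrix ι ι ℝ} (hM : M.PosSemidef)
    (hS : S.PosDef) (x : ι → ℝ) : x ⬝ᵥ M *ᵥ x ≤ (M * S).trace * (x ⬝ᵥ S⁻¹ *ᵥ x) := by
  have h := hM.trace_mul_le_trace_mul (hS.vecMulVec_le_smul x)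
  rwa [mul_smul_comm, trace_smul, smul_eq_mul, mul_comm, mul_vecMulVec, trace_vecMulVec,
    dotProduct_comm] at h

lemma IsHermitian.le_smul_one_of_eigenvalues_le {A : Matrix ι ι ℝ} (hA : A.IsHermitian) {c : ℝ}
    (h : ∀ i, hA.eigenvalues i ≤ c) : A ≤ c • 1 := by
  rw [← Algebra.algebraMap_eq_smul_one]
  refine le_algebraMap_of_spectrum_le (fun x hx => ?_) hA.isSelfAdjoint
  obtain ⟨i, rfl⟩ := hA.spectrum_real_eq_range_eigenvalues ▸ hx
  exact h i

lemma PosDef.trace_sub_card_sub_log_det {A : Matrix ι ι ℝ} (hA : A.PosDef) :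
    A.trace - Fintype.card ι - Real.log A.det =
      ∑ i, (hA.1.eigenvalues i - 1 - Real.log (hA.1.eigenvalues i)) := by
  simp only [hA.1.trace_eq_sum_eigenvalues, hA.1.det_eq_prod_eigenvalues,
    RCLike.ofReal_real_eq_id, id_eq]
  rw [Real.log_prod fun i _ => (hA.eigenvalues_pos i).ne', Finset.sum_sub_distrib,
    Finset.sum_sub_distrib]
  simp

lemma PosDef.le_smul_one_of_trace_sub_log_det_le {A : Matrix ι ι ℝ} (hA : A.PosDef) {e : ℝ}
    (h : A.trace - Fintype.card ι - Real.log A.det ≤ e) : A ≤ (2 + 2 * e) • 1 := by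
  refine hA.1.le_smul_one_of_eigenvalues_le fun j => ?_
  refine Real.le_two_add_two_mul_of_sub_one_sub_log_le (hA.eigenvalues_pos j) (le_trans ?_ h)
  rw [hA.trace_sub_card_sub_log_det]
  refine Finset.single_le_sum
    (f := fun i => hA.1.eigenvalues i - 1 - Real.log (hA.1.eigenvalues i))
    (fun i _ => ?_) (Finset.mem_univ j)
  linarith [Real.log_le_sub_one_of_pos (hA.eigenvalues_pos i)]

lemma PosDef.le_smul_of_trace_inv_mul_sub_log_det_le {P Q : Matrix ι ι ℝ} (hP : P.PosDef)
    (hQ : Q.PosDef) {e : ℝ} (h : (Q⁻¹ * P).trace - Fintype.card ι - Real.log (Q⁻¹ * P).det ≤ e) :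
    P ≤ (2 + 2 * e) • Q := by
  set S := CFC.sqrt Q
  have hS : IsStrictlyPositive S := hQ.isStrictlyPositive.sqrt
  have hSdet : IsUnit S.det := (isUnit_iff_isUnit_det S).mp hS.isUnit
  have hSS : S * S = Q := CFC.sqrt_mul_sqrt_self Q hQ.posSemidef.nonneg
  have hSinv : S⁻¹ * S⁻¹ = Q⁻¹ := by rw [← hSS, mul_inv_rev]
  have hS' : IsSelfAdjoint S⁻¹ := (isHermitian_iff_isSelfAdjoint.mpr hS.isSelfAdjoint).inv
  have hA : (S⁻¹ * P * S⁻¹).PosDef := by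
    have := (IsUnit.posDef_star_left_conjugate_iff (isUnit_nonsing_inv_iff.mpr hS.isUnit)).mpr hP
    rwa [hS'.star_eq] at this
  have key := hA.le_smul_one_of_trace_sub_log_det_le (e := e) (by
    rwa [trace_mul_cycle, hSinv, det_mul, det_mul, mul_comm, ← mul_assoc, ← det_mul, hSinv,
      ← det_mul])
  have := hS.isSelfAdjoint.conjugate_le_conjugate key
  rwa [Matrix.mul_assoc, Matrix.mul_assoc, nonsing_inv_mul _ hSdet, Matrix.mul_one,
    ← Matrix.mul_assoc, mul_nonsing_inv _ hSdet, Matrix.one_mul, Matrix.mul_smul, Matrix.mul_one,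
    Matrix.smul_mul, hSS] at this

end DecidableEq

end Matrix

theorem combined_kl_diff_bound_general {n : ℕ} (M Sp Sq : Matrix (Fin n) (Fin n) ℝ)
    (hM : M.PosSemidef) (hSp : Sp.PosDef) (hSq : Sq.PosDef)
    (μp μq : Fin n → ℝ) (εt ε : ℝ)
    (h1 : (μp - μq) ⬝ᵥ (Sq⁻¹ *ᵥ (μp - μq)) ≤ 2 * εt)
    (h2 : (Sq⁻¹ * Sp).trace - (n : ℝ) - Real.log (Sq⁻¹ * Sp).det ≤ 2 * εt)
    (h3 : μq ⬝ᵥ (M *ᵥ μq) + (M * Sq).trace ≤ 2 * ε) :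
    μp ⬝ᵥ (M *ᵥ μp) + (M * Sp).trace ≤ 2 * ε * (1 + 6 * εt + 2 * n) := by
  set d := μp - μq
  set s := μq ⬝ᵥ M *ᵥ μq
  set r := (M * Sq).trace
  have hs : 0 ≤ s := by simpa using hM.dotProduct_mulVec_nonneg μq
  have hr : 0 ≤ r := hM.trace_mul_nonneg hSq.posSemidef
  have hε : 0 ≤ ε := by linarith
  have hεt : 0 ≤ εt := by
    linarith [show 0 ≤ d ⬝ᵥ Sq⁻¹ *ᵥ d by simpa using hSq.inv.posSemidef.dotProduct_mulVec_nonneg d]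
  have hg : d ⬝ᵥ M *ᵥ d ≤ 2 * εt * r :=
    (hM.dotProduct_mulVec_le_trace_mul_mul hSq d).trans (by nlinarith)
  have hcross : 2 * (μq ⬝ᵥ M *ᵥ d) ≤ 2 * εt * s + r :=
    two_mul_le_add_of_sq_le_mul (by positivity) hr
      ((hM.dotProduct_mulVec_sq_le μq d).trans (by nlinarith))
  have hp : (M * Sp).trace ≤ (2 + 2 * (2 * εt)) * r := by
    have hle := hSp.le_smul_of_trace_inv_mul_sub_log_det_le hSq (by simpa using h2)
    simpa [mul_smul_comm, trace_smul] using hM.trace_mul_le_trace_mul hle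
  have hexp : μp ⬝ᵥ M *ᵥ μp = s + 2 * (μq ⬝ᵥ M *ᵥ d) + d ⬝ᵥ M *ᵥ d := by
    rw [← hM.1.add_dotProduct_mulVec_add, add_sub_cancel]
  rcases n.eq_zero_or_pos with rfl | hn
  · simp only [Matrix.trace_fin_zero, dotProduct, Finset.univ_eq_empty, Finset.sum_empty,
      CharP.cast_eq_zero, mul_zero, add_zero]
    positivity
  · have hn1 : (1 : ℝ) ≤ n := by exact_mod_cast hn
    linarith [mul_le_mul_of_nonneg_left h3 (by positivity : (0 : ℝ) ≤ 3 + 6 * εt),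
      mul_nonneg hεt hs, mul_nonneg hε (sub_nonneg.2 hn1)]

/-- Let `M` be real symmetric positive semidefinite, `Σ_p`, `Σ_q` real symmetric positive
definite, `μ_p, μ_q ∈ ℝⁿ` and `ε_t, ε ≥ 0`. Assume
(i) `(μ_p − μ_q)ᵀ Σ_q⁻¹ (μ_p − μ_q) ≤ 2 ε_t`;
(ii) `trace(Σ_q⁻¹ Σ_p) − n − log det(Σ_q⁻¹ Σ_p) ≤ 2 ε_t`;
(iii) `μ_qᵀ M μ_q + trace(M Σ_q) ≤ 2 ε`.
Then `μ_pᵀ M μ_p + trace(M Σ_p) ≤ 2 ε (1 + 6 ε_t + 2 n)`. -/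
theorem combined_kl_diff_bound {n : ℕ} (M Sp Sq : Matrix (Fin n) (Fin n) ℝ)
    (hM : M.PosSemidef) (hSp : Sp.PosDef) (hSq : Sq.PosDef)
    (μp μq : Fin n → ℝ) (εt ε : ℝ) (hεt : 0 ≤ εt) (hε : 0 ≤ ε)
    (h1 : (μp - μq) ⬝ᵥ (Sq⁻¹ *ᵥ (μp - μq)) ≤ 2 * εt)
    (h2 : (Sq⁻¹ * Sp).trace - (n : ℝ) - Real.log (Sq⁻¹ * Sp).det ≤ 2 * εt)
    (h3 : μq ⬝ᵥ (M *ᵥ μq) + (M * Sq).trace ≤ 2 * ε) :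
    μp ⬝ᵥ (M *ᵥ μp) + (M * Sp).trace ≤ 2 * ε * (1 + 6 * εt + 2 * n) :=
  combined_kl_diff_bound_general M Sp Sq hM hSp hSq μp μq εt ε h1 h2 h3
end

section
/- Closed-form Gaussian policy update (Sec. 3.2): Let d_a, d_s be positive naturals, K a real d_a × d_s matrix, b ∈ ℝ^{d_a}, Σ a symmetric positive definite d_a × d_a matrix, Q_aa a symmetric d_a × d_a matrix, Q_as a d_a × d_s matrix, q_a ∈ ℝ^{d_a}, and η, ω > 0 real numbers such that η Σ⁻¹ − Q_aa is positive definite. Define F = (η Σ⁻¹ − Q_aa)⁻¹, L = η Σ⁻¹ K + Q_as, and f = η Σ⁻¹ b + q_a. Then for every s ∈ ℝ^{d_s} there exists a constant c > 0 such that for all a ∈ ℝ^{d_a}: exp(−(η/(2(η+ω))) (a − K s − b)ᵀ Σ⁻¹ (a − K s − b)) · exp((½ aᵀ Q_aa a + aᵀ Q_as s + aᵀ q_a)/(η+ω)) = c · exp(−½ (a − F (L s + f))ᵀ ((η+ω) F)⁻¹ (a − F (L s + f))); that is, the reweighted Gaussian policy density π(a|s)^{η/(η+ω)} exp(Q(s,a)/(η+ω))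 with quadratic Q(s,a) = ½ aᵀ Q_aa a + aᵀ Q_as s + aᵀ q_a is, up to a positive factor independent of a, the density shape of the Gaussian with mean F(L s + f) and covariance (η+ω) F. -/
/-!
Up to a term independent of `a`, the exponent of the reweighted density is
`-(aᵀ M a - 2 aᵀ w) / (2 (η + ω))` with `M = η Σ⁻¹ - Q_aa` and `w = L s + f`. Completing the
square with `μ = M⁻¹ w` turns `aᵀ M a - 2 aᵀ w` into `(a - μ)ᵀ M (a - μ) - μᵀ w`, and
`M / (η + ω)` is the inverse of the covariance `(η + ω) F`; the leftover constant goes into `c`.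
-/

open Matrix

section QuadraticForm

variable {n R : Type*} [Fintype n] [CommRing R]

theorem Matrix.IsSymm.dotProduct_mulVec_comm {A : Matrix n n R} (hA : A.IsSymm) (x y : n → R) :
    x ⬝ᵥ (A *ᵥ y) = y ⬝ᵥ (A *ᵥ x) := by
  conv_lhs => rw [← hA.eq, mulVec_transpose]
  rw [dotProduct_comm, ← dotProduct_mulVec]

theorem Matrix.IsSymm.dotProduct_mulVec_sub {A : Matrix n n R} (hA : A.IsSymm) (x y : n → R) :
    (x - y) ⬝ᵥ (A *ᵥ (x - y)) = x ⬝ᵥ (A *ᵥ x) - 2 * (x ⬝ᵥ (A *ᵥ y)) + y ⬝ᵥ (A *ᵥ y) := by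
  rw [mulVec_sub, dotProduct_sub, sub_dotProduct, sub_dotProduct, hA.dotProduct_mulVec_comm y x]
  ring

theorem Matrix.IsSymm.dotProduct_mulVec_sub_inv_mulVec [DecidableEq n] {M : Matrix n n R}
    (hM : M.IsSymm) (hdet : IsUnit M.det) (x w : n → R) :
    (x - M⁻¹ *ᵥ w) ⬝ᵥ (M *ᵥ (x - M⁻¹ *ᵥ w)) =
      x ⬝ᵥ (M *ᵥ x) - 2 * (x ⬝ᵥ w) + (M⁻¹ *ᵥ w) ⬝ᵥ w := by
  rw [hM.dotProduct_mulVec_sub, mulVec_mulVec, mul_nonsing_inv M hdet, one_mulVec]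

end QuadraticForm

theorem exists_pos_forall_exp_mul_exp_eq {α : Type*} {g h k : α → ℝ} (C : ℝ)
    (H : ∀ a, g a + h a = k a + C) :
    ∃ c : ℝ, 0 < c ∧ ∀ a, Real.exp (g a) * Real.exp (h a) = c * Real.exp (k a) :=
  ⟨Real.exp C, Real.exp_pos C, fun a => by rw [← Real.exp_add, H, Real.exp_add, mul_comm]⟩

theorem gaussian_policy_update_general {da ds : ℕ}
    (K : Matrix (Fin da) (Fin ds) ℝ) (b : Fin da → ℝ)
    (Sg : Matrix (Fin da) (Fin da) ℝ) (hSg : Sg.PosDef)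
    (Qaa : Matrix (Fin da) (Fin da) ℝ)
    (Qas : Matrix (Fin da) (Fin ds) ℝ) (qa : Fin da → ℝ)
    (η ω : ℝ) (hη : 0 < η) (hω : 0 < ω)
    (hPD : (η • Sg⁻¹ - Qaa).PosDef)
    (F : Matrix (Fin da) (Fin da) ℝ) (hF : F = (η • Sg⁻¹ - Qaa)⁻¹)
    (L : Matrix (Fin da) (Fin ds) ℝ) (hL : L = η • Sg⁻¹ * K + Qas)
    (f : Fin da → ℝ) (hf : f = η • (Sg⁻¹ *ᵥ b) + qa) :
    ∀ s : Fin ds → ℝ, ∃ c : ℝ, 0 < c ∧ ∀ a : Fin da → ℝ,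
      Real.exp (-(η / (2 * (η + ω))) *
          ((a - K *ᵥ s - b) ⬝ᵥ (Sg⁻¹ *ᵥ (a - K *ᵥ s - b)))) *
        Real.exp (((1 / 2) * (a ⬝ᵥ (Qaa *ᵥ a)) + a ⬝ᵥ (Qas *ᵥ s) + a ⬝ᵥ qa) / (η + ω)) =
      c * Real.exp (-(1 / 2) *
          ((a - F *ᵥ (L *ᵥ s + f)) ⬝ᵥ (((η + ω) • F)⁻¹ *ᵥ (a - F *ᵥ (L *ᵥ s + f))))) := by
  intro s
  set M := η • Sg⁻¹ - Qaa
  set m := K *ᵥ s + b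
  set w := L *ᵥ s + f
  have hηω : η + ω ≠ 0 := by positivity
  have hSgInv : Sg⁻¹.IsSymm := (isHermitian_iff_isSymm.mp hSg.isHermitian).inv
  have hdet : IsUnit M.det := hPD.det_pos.ne'.isUnit
  have hFinv : ((η + ω) • F)⁻¹ = (η + ω)⁻¹ • M := by
    have := invertibleOfNonzero hηω
    rw [hF, inv_smul _ _ (isUnit_nonsing_inv_det M hdet), nonsing_inv_nonsing_inv M hdet,
      invOf_eq_inv]
  have hM : ∀ a, a ⬝ᵥ (M *ᵥ a) = η * (a ⬝ᵥ (Sg⁻¹ *ᵥ a)) - a ⬝ᵥ (Qaa *ᵥ a) := fun a => by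
    simp only [M, sub_mulVec, smul_mulVec, dotProduct_sub, dotProduct_smul, smul_eq_mul]
  have hw : ∀ a, a ⬝ᵥ w = η * (a ⬝ᵥ (Sg⁻¹ *ᵥ m)) + a ⬝ᵥ (Qas *ᵥ s) + a ⬝ᵥ qa := fun a => by
    simp only [w, m, hL, hf, add_mulVec, smul_mulVec, ← mulVec_mulVec,
      dotProduct_add, dotProduct_smul, mulVec_add, smul_eq_mul]
    ring
  refine exists_pos_forall_exp_mul_exp_eq
    ((M⁻¹ *ᵥ w) ⬝ᵥ w / (2 * (η + ω)) - η / (2 * (η + ω)) * (m ⬝ᵥ (Sg⁻¹ *ᵥ m))) fun a => ?_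
  rw [sub_sub, hSgInv.dotProduct_mulVec_sub, hFinv, hF, smul_mulVec, dotProduct_smul, smul_eq_mul,
    (isHermitian_iff_isSymm.mp hPD.isHermitian).dotProduct_mulVec_sub_inv_mulVec hdet, hM, hw]
  field_simp
  ring

/-- **Closed-form Gaussian policy update**: with `F = (η Σ⁻¹ − Q_aa)⁻¹`,
`L = η Σ⁻¹ K + Q_as` and `f = η Σ⁻¹ b + q_a`, for every state `s` the reweighted policy density
`π(a|s)^{η/(η+ω)} · exp(Q(s,a)/(η+ω))` (with Gaussian policy of mean `K s + b` and covariance `Σ`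
and quadratic model `Q(s,a) = ½ aᵀ Q_aa a + aᵀ Q_as s + aᵀ q_a`) equals, up to a positive factor
`c` independent of `a`, the density shape of the Gaussian with mean `F (L s + f)` and covariance
`(η+ω) F`. -/
theorem gaussian_policy_update {da ds : ℕ} (hda : 0 < da) (hds : 0 < ds)
    (K : Matrix (Fin da) (Fin ds) ℝ) (b : Fin da → ℝ)
    (Sg : Matrix (Fin da) (Fin da) ℝ) (hSg : Sg.PosDef)
    (Qaa : Matrix (Fin da) (Fin da) ℝ) (hQaa : Qaa.IsSymm)
    (Qas : Matrix (Fin da) (Fin ds) ℝ) (qa : Fin da → ℝ)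
    (η ω : ℝ) (hη : 0 < η) (hω : 0 < ω)
    (hPD : (η • Sg⁻¹ - Qaa).PosDef)
    (F : Matrix (Fin da) (Fin da) ℝ) (hF : F = (η • Sg⁻¹ - Qaa)⁻¹)
    (L : Matrix (Fin da) (Fin ds) ℝ) (hL : L = η • Sg⁻¹ * K + Qas)
    (f : Fin da → ℝ) (hf : f = η • (Sg⁻¹ *ᵥ b) + qa) :
    ∀ s : Fin ds → ℝ, ∃ c : ℝ, 0 < c ∧ ∀ a : Fin da → ℝ,
      Real.exp (-(η / (2 * (η + ω))) *
          ((a - K *ᵥ s - b) ⬝ᵥ (Sg⁻¹ *ᵥ (a - K *ᵥ s - b)))) *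
        Real.exp (((1 / 2) * (a ⬝ᵥ (Qaa *ᵥ a)) + a ⬝ᵥ (Qas *ᵥ s) + a ⬝ᵥ qa) / (η + ω)) =
      c * Real.exp (-(1 / 2) *
          ((a - F *ᵥ (L *ᵥ s + f)) ⬝ᵥ (((η + ω) • F)⁻¹ *ᵥ (a - F *ᵥ (L *ᵥ s + f))))) :=
  gaussian_policy_update_general K b Sg hSg Qaa Qas qa η ω hη hω hPD F hF L hL f hf
end
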